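/- Let A ∈ ℂ^{2n×2n} be Hermitian with tr A = 0. Then there exists a unitary matrix U ∈ ℂ^{2n×2n} with U*JU = J (conjugate symplectic), where J = [[0, I_n],[−I_n, 0]], such that U*AU is hollow. -/

import Mathlib

open Matrix Complex

noncomputable def dftM (n : ℕ) : Matrix (Fin n) (Fin n) ℂ :=
  fun j k => Complex.exp (2 * (Real.pi : ℂ) * Complex.I * ((j : ℕ) * (k : ℕ) : ℕ) / n)
    * ((Real.sqrt n : ℝ) : ℂ)⁻¹

lemma dftM_entry_term (n : ℕ) (j k l : Fin n) :
    (starRingEnd ℂ) (dftM n j k) * dftM n j l =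
      Complex.exp (2 * (Real.pi : ℂ) * Complex.I * (((l:ℤ) - (k:ℤ)) / n)) ^ (j : ℕ)
        * (((Real.sqrt n : ℝ) : ℂ)⁻¹ * ((Real.sqrt n : ℝ) : ℂ)⁻¹) := by
  rw [← Complex.exp_nat_mul]
  simp only [dftM, _root_.map_mul, map_div₀, map_ofNat, Complex.conj_I, Complex.conj_ofReal,
    map_natCast, map_inv₀, ← Complex.exp_conj]
  rw [mul_mul_mul_comm, ← Complex.exp_add]
  congr 1
  congr 1
  rcases em ((n:ℂ) = 0) with h | h
  · simp [h]
  · push_cast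
    field_simp
    ring

lemma dftM_abs_sq (n : ℕ) (j k : Fin n) :
    (starRingEnd ℂ) (dftM n j k) * dftM n j k = (n : ℂ)⁻¹ := by
  rw [dftM_entry_term]
  have hn : 0 < n := k.pos
  simp only [sub_self, zero_div, mul_zero, Complex.exp_zero, one_pow, one_mul]
  rw [← Complex.ofReal_inv, ← Complex.ofReal_mul, ← Real.sqrt_inv,
    Real.mul_self_sqrt (by positivity)]
  push_cast
  ring

lemma dftM_unitary (n : ℕ) : (dftM n)ᴴ * dftM n = 1 := by
  ext k l
  simp only [Matrix.mul_apply, conjTranspose_apply, Matrix.one_apply, Complex.star_def]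
  rcases eq_or_ne k l with rfl | hkl
  · simp only [if_pos rfl, ↓reduceIte]
    have : ∀ j : Fin n, (starRingEnd ℂ) (dftM n j k) * dftM n j k = (n:ℂ)⁻¹ :=
      fun j => dftM_abs_sq n j k
    rw [Finset.sum_congr rfl (fun j _ => this j), Finset.sum_const, Finset.card_univ,
      Fintype.card_fin, nsmul_eq_mul]
    have hn : (n:ℂ) ≠ 0 := by
      have : 0 < n := k.pos
      exact_mod_cast Nat.cast_ne_zero.mpr this.ne'
    field_simp
  · rw [if_neg hkl]
    set ζ : ℂ := Complex.exp (2 * (Real.pi : ℂ) * Complex.I * (((l:ℤ) - (k:ℤ)) / n)) with hζ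
    have hterm : ∀ j : Fin n, (starRingEnd ℂ) (dftM n j k) * dftM n j l =
        ζ ^ (j:ℕ) * (((Real.sqrt n : ℝ) : ℂ)⁻¹ * ((Real.sqrt n : ℝ) : ℂ)⁻¹) :=
      fun j => dftM_entry_term n j k l
    rw [Finset.sum_congr rfl (fun j _ => hterm j), ← Finset.sum_mul]
    have hn : 0 < n := k.pos
    have hnC : (n:ℂ) ≠ 0 := Nat.cast_ne_zero.mpr hn.ne'
    have hζn : ζ ^ n = 1 := by
      rw [hζ, ← Complex.exp_nat_mul]
      rw [show (n:ℂ) * (2 * (Real.pi : ℂ) * Complex.I * (((l:ℤ) - (k:ℤ)) / n)) =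
          ((l:ℤ) - (k:ℤ) : ℤ) * (2 * (Real.pi : ℂ) * Complex.I) by push_cast; field_simp]
      exact Complex.exp_int_mul_two_pi_mul_I _
    have hζ1 : ζ ≠ 1 := by
      rw [hζ]
      intro hone
      rw [Complex.exp_eq_one_iff] at hone
      obtain ⟨m, hm⟩ := hone
      have hπ : (2 * (Real.pi : ℂ) * Complex.I) ≠ 0 := by
        simp [Real.pi_ne_zero, Complex.I_ne_zero]
      have h1 : ((((l:ℤ) - (k:ℤ)) : ℂ)) / n = (m:ℂ) := by
        apply mul_left_cancel₀ hπ
        push_cast at hm ⊢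
        linear_combination hm
      have h3 : (l:ℤ) - (k:ℤ) = m * n := by
        have h2 := (div_eq_iff hnC).mp h1
        exact_mod_cast h2
      have hl : ((l:ℕ):ℤ) < n := by exact_mod_cast l.isLt
      have hk : ((k:ℕ):ℤ) < n := by exact_mod_cast k.isLt
      have hl0 : 0 ≤ ((l:ℕ):ℤ) := Int.natCast_nonneg _
      have hk0 : 0 ≤ ((k:ℕ):ℤ) := Int.natCast_nonneg _
      have hne : ((l:ℕ):ℤ) ≠ ((k:ℕ):ℤ) := by
        intro h
        exact hkl (Fin.ext (by exact_mod_cast h.symm))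
      have hnz : (0:ℤ) < n := by exact_mod_cast hn
      rcases lt_trichotomy m 0 with h|h|h
      · have hm1 : m ≤ -1 := by omega
        nlinarith
      · subst h; omega
      · have hm1 : 1 ≤ m := h
        nlinarith
    rw [Fin.sum_univ_eq_sum_range (fun j => ζ ^ j), geom_sum_eq hζ1, hζn]
    simp

lemma const_diag {n : ℕ} (X : Matrix (Fin n) (Fin n) ℂ) (hX : X.IsHermitian) :
    ∃ V : Matrix (Fin n) (Fin n) ℂ, Vᴴ * V = 1 ∧ ∀ k, (Vᴴ * X * V) k k = X.trace / n := by
  set Uu : Matrix (Fin n) (Fin n) ℂ := (hX.eigenvectorUnitary : Matrix (Fin n) (Fin n) ℂ)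
  set d : Fin n → ℂ := RCLike.ofReal ∘ hX.eigenvalues with hd
  have hspec : X = Uu * diagonal d * Uuᴴ := by
    have h := hX.spectral_theorem
    rw [Unitary.conjStarAlgAut_apply, star_eq_conjTranspose] at h
    exact h
  have hU1 : Uuᴴ * Uu = 1 := by
    simpa [star_eq_conjTranspose] using Matrix.mem_unitaryGroup_iff'.mp hX.eigenvectorUnitary.2
  have hU2 : Uu * Uuᴴ = 1 := by
    simpa [star_eq_conjTranspose] using Matrix.mem_unitaryGroup_iff.mp hX.eigenvectorUnitary.2
  refine ⟨Uu * dftM n, ?_, ?_⟩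
  · rw [conjTranspose_mul, mul_assoc, ← mul_assoc Uuᴴ, hU1, one_mul, dftM_unitary]
  · intro k
    have hXV : (Uu * dftM n)ᴴ * X * (Uu * dftM n) = (dftM n)ᴴ * diagonal d * dftM n := by
      rw [hspec, conjTranspose_mul]
      rw [show (dftM n)ᴴ * Uuᴴ * (Uu * diagonal d * Uuᴴ) * (Uu * dftM n) =
        (dftM n)ᴴ * (Uuᴴ * Uu) * diagonal d * (Uuᴴ * Uu) * dftM n by
          simp only [mul_assoc]]
      rw [hU1]
      simp [mul_assoc]
    rw [hXV]
    have htr : X.trace = ∑ j, d j := by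
      rw [hspec, Matrix.trace_mul_cycle, hU1, one_mul, Matrix.trace_diagonal]
    have hentry : ((dftM n)ᴴ * diagonal d * dftM n) k k = ∑ j, (n:ℂ)⁻¹ * d j := by
      rw [mul_assoc, Matrix.mul_apply]
      refine Finset.sum_congr rfl fun j _ => ?_
      rw [Matrix.mul_apply]
      rw [Finset.sum_eq_single j (by
        intro b _ hb
        simp [Matrix.diagonal_apply_ne d (Ne.symm hb)]) (by simp)]
      rw [conjTranspose_apply, Matrix.diagonal_apply_eq, Complex.star_def]
      rw [show (starRingEnd ℂ) (dftM n j k) * (d j * dftM n j k) =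
        ((starRingEnd ℂ) (dftM n j k) * dftM n j k) * d j by ring, dftM_abs_sq]
    rw [hentry, htr, Finset.sum_div]
    exact Finset.sum_congr rfl fun j _ => by rw [div_eq_inv_mul]

lemma pair_lemma {n : ℕ} (C E P : Matrix (Fin n) (Fin n) ℂ)
    (hC : C.IsHermitian) (hE : E.IsHermitian) (htr : C.trace + E.trace = 0) :
    ∃ V W : Matrix (Fin n) (Fin n) ℂ, Vᴴ * V = 1 ∧ Wᴴ * W = 1 ∧
      ∀ k, (Vᴴ * C * V) k k + (Wᴴ * E * W) k k = 0 ∧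
        (Vᴴ * P * W) k k + (Wᴴ * Pᴴ * V) k k = 0 := by
  obtain ⟨V, hV, hVd⟩ := const_diag C hC
  obtain ⟨W0, hW0, hW0d⟩ := const_diag E hE
  set z : Fin n → ℂ := fun k => (Vᴴ * P * W0) k k with hz
  set d : Fin n → ℂ := fun k =>
    if z k = 0 then 1 else Complex.I * (starRingEnd ℂ) (z k) / ((‖z k‖ : ℝ) : ℂ) with hdd
  have habs : ∀ k, z k ≠ 0 → ((‖z k‖ : ℝ) : ℂ) ≠ 0 := by
    intro k h
    simpa using (norm_ne_zero_iff.mpr h)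
  have habs1 : ∀ k, ‖d k‖ = 1 := by
    intro k
    rcases eq_or_ne (z k) 0 with h | h
    · simp [hdd, h]
    · rw [hdd]
      simp only [if_neg h]
      rw [norm_div, norm_mul, Complex.norm_I, Complex.norm_conj, Complex.norm_real,
        Real.norm_of_nonneg (norm_nonneg (z k))]
      rw [one_mul]
      exact div_self (norm_ne_zero_iff.mpr h)
  have hd1 : ∀ k, (starRingEnd ℂ) (d k) * d k = 1 := by
    intro k
    rw [mul_comm, Complex.mul_conj, Complex.normSq_eq_norm_sq, habs1]
    norm_num
  refine ⟨V, W0 * diagonal d, hV, ?_, ?_⟩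
  · rw [conjTranspose_mul, diagonal_conjTranspose, mul_assoc, ← mul_assoc W0ᴴ, hW0, one_mul,
      diagonal_mul_diagonal]
    have hfun : (fun i => star d i * d i) = fun _ => (1:ℂ) := funext fun k => hd1 k
    rw [hfun, Matrix.diagonal_one]
  intro k
  have hcast : (n : ℂ) = (n : ℂ) := rfl
  constructor
  · have hWE : ((W0 * diagonal d)ᴴ * E * (W0 * diagonal d)) k k = (W0ᴴ * E * W0) k k := by
      rw [conjTranspose_mul, diagonal_conjTranspose]
      rw [show diagonal (star d) * W0ᴴ * E * (W0 * diagonal d) =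
        diagonal (star d) * ((W0ᴴ * E * W0) * diagonal d) by simp only [mul_assoc]]
      rw [Matrix.diagonal_mul, Matrix.mul_diagonal]
      simp only [Pi.star_apply, Complex.star_def]
      linear_combination ((W0ᴴ * E * W0) k k) * hd1 k
    rw [hWE, hVd, hW0d, ← add_div, htr, zero_div]
  · have h1 : (Vᴴ * P * (W0 * diagonal d)) k k = z k * d k := by
      rw [← mul_assoc, Matrix.mul_diagonal, hz]
    have h2 : ((W0 * diagonal d)ᴴ * Pᴴ * V) k k = (starRingEnd ℂ) (z k * d k) := by
      rw [conjTranspose_mul, diagonal_conjTranspose, mul_assoc, mul_assoc, Matrix.diagonal_mul]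
      rw [show (W0ᴴ * (Pᴴ * V)) k k = ((Vᴴ * P * W0)ᴴ) k k by
        simp only [conjTranspose_mul, conjTranspose_conjTranspose, mul_assoc]]
      rw [conjTranspose_apply, hz, _root_.map_mul]
      simp [Complex.star_def, mul_comm]
    rw [h1, h2]
    rcases eq_or_ne (z k) 0 with h | h
    · simp [h]
    · rw [hdd]
      simp only [if_neg h]
      rw [show z k * (Complex.I * (starRingEnd ℂ) (z k) / ((‖z k‖ : ℝ) : ℂ)) =
        Complex.I * ((z k * (starRingEnd ℂ) (z k)) / ((‖z k‖ : ℝ) : ℂ)) by ring]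
      rw [Complex.mul_conj, Complex.normSq_eq_norm_sq]
      simp only [_root_.map_mul, map_div₀, Complex.conj_I, Complex.conj_ofReal]
      ring

section helpers
variable {n : ℕ}

lemma so_mul (a b : ℂ) : (a • (1:Matrix (Fin n) (Fin n) ℂ)) * (b • 1) = (a*b) • 1 := by
  simp [Matrix.smul_mul, Matrix.mul_smul, smul_smul, mul_comm]

lemma so_add (a b : ℂ) : (a • (1:Matrix (Fin n) (Fin n) ℂ)) + (b • 1) = (a+b) • 1 :=
  (add_smul a b 1).symm

lemma so_mulM (a : ℂ) (X : Matrix (Fin n) (Fin n) ℂ) :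
    (a • (1:Matrix (Fin n) (Fin n) ℂ)) * X = a • X := by
  simp [Matrix.smul_mul]

lemma so_mulM' (a : ℂ) (X : Matrix (Fin n) (Fin n) ℂ) :
    X * (a • (1:Matrix (Fin n) (Fin n) ℂ)) = a • X := by
  simp [Matrix.mul_smul]

end helpers


theorem stmt_17 (n : ℕ)
    (A : Matrix (Fin n ⊕ Fin n) (Fin n ⊕ Fin n) ℂ)
    (hA : A.IsHermitian) (htr : A.trace = 0) :
    ∃ U : Matrix (Fin n ⊕ Fin n) (Fin n ⊕ Fin n) ℂ,
      Uᴴ * U = 1 ∧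
      Uᴴ * (Matrix.fromBlocks 0 1 (-1) 0) * U = Matrix.fromBlocks 0 1 (-1) 0 ∧
      ∀ i, (Uᴴ * A * U) i i = 0 := by
  classical
  set s : ℂ := ((Real.sqrt 2 : ℝ) : ℂ)⁻¹ with hsdef
  have hs2 : s * s = 2⁻¹ := by
    rw [hsdef, ← mul_inv, ← Complex.ofReal_mul, Real.mul_self_sqrt (by norm_num)]
    norm_num
  set T : Matrix (Fin n ⊕ Fin n) (Fin n ⊕ Fin n) ℂ :=
    fromBlocks (s • 1) (s • 1) ((s * Complex.I) • 1) ((-(s * Complex.I)) • 1) with hT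
  have hcs : star s = s := by rw [hsdef]; simp [Complex.conj_ofReal]
  have hcsi : star (s * Complex.I) = -(s * Complex.I) := by
    simp [star_mul', hcs, Complex.conj_I, Complex.star_def]
  have hcsi' : star (-(s * Complex.I)) = s * Complex.I := by
    rw [star_neg, hcsi, neg_neg]
  have hTH : Tᴴ = fromBlocks (s • 1) ((-(s * Complex.I)) • 1) (s • 1) ((s * Complex.I) • 1) := by
    rw [hT, fromBlocks_conjTranspose]
    simp [conjTranspose_smul, hcs, hcsi, hcsi']
  have hTT : Tᴴ * T = 1 := by
    rw [hTH, hT, fromBlocks_multiply]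
    simp only [so_mul, so_add]
    rw [← fromBlocks_one]
    rw [show s * s + -(s * Complex.I) * (s * Complex.I) = 1 by
        linear_combination (1 - Complex.I*Complex.I) * hs2 - 2⁻¹ * Complex.I_mul_I,
      show s * s + -(s * Complex.I) * -(s * Complex.I) = 0 by
        linear_combination (1 + Complex.I*Complex.I) * hs2 + 2⁻¹ * Complex.I_mul_I,
      show s * s + s * Complex.I * (s * Complex.I) = 0 by
        linear_combination (1 + Complex.I*Complex.I) * hs2 + 2⁻¹ * Complex.I_mul_I,
      show s * s + s * Complex.I * -(s * Complex.I) = 1 by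
        linear_combination (1 - Complex.I*Complex.I) * hs2 - 2⁻¹ * Complex.I_mul_I]
    norm_num
  have hTTH : T * Tᴴ = 1 := mul_eq_one_comm.mp hTT
  set J : Matrix (Fin n ⊕ Fin n) (Fin n ⊕ Fin n) ℂ := fromBlocks 0 1 (-1) 0 with hJ
  have hJ' : J = fromBlocks ((0:ℂ) • 1) ((1:ℂ) • 1) ((-1:ℂ) • 1) ((0:ℂ) • 1) := by
    rw [hJ]; norm_num
  set K : Matrix (Fin n ⊕ Fin n) (Fin n ⊕ Fin n) ℂ :=
    fromBlocks (Complex.I • 1) 0 0 ((-Complex.I) • 1) with hK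
  have hTJT : Tᴴ * J * T = K := by
    rw [hTH, hJ', hT, fromBlocks_multiply]
    simp only [so_mul, so_add]
    rw [fromBlocks_multiply]
    simp only [so_mul, so_add]
    rw [hK]
    rw [show (s * 0 + -(s * Complex.I) * -1) * s + (s * 1 + -(s * Complex.I) * 0) * (s * Complex.I)
        = Complex.I by
        linear_combination (2*Complex.I) * hs2,
      show (s * 0 + -(s * Complex.I) * -1) * s + (s * 1 + -(s * Complex.I) * 0) * -(s * Complex.I)
        = 0 by linear_combination,
      show (s * 0 + s * Complex.I * -1) * s + (s * 1 + s * Complex.I * 0) * (s * Complex.I)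
        = 0 by linear_combination,
      show (s * 0 + s * Complex.I * -1) * s + (s * 1 + s * Complex.I * 0) * -(s * Complex.I)
        = -Complex.I by linear_combination (-2*Complex.I) * hs2]
    norm_num
  set B : Matrix (Fin n ⊕ Fin n) (Fin n ⊕ Fin n) ℂ := Tᴴ * A * T with hB
  have hBherm : Bᴴ = B := by
    rw [hB, conjTranspose_mul, conjTranspose_mul, conjTranspose_conjTranspose, hA.eq,
      mul_assoc]
  have htrB : B.trace = 0 := by
    rw [hB, Matrix.trace_mul_cycle, hTTH, one_mul, htr]
  set B11 := B.toBlocks₁₁ with hB11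
  set B12 := B.toBlocks₁₂ with hB12
  set B21 := B.toBlocks₂₁ with hB21
  set B22 := B.toBlocks₂₂ with hB22
  have hBb : B = fromBlocks B11 B12 B21 B22 := (fromBlocks_toBlocks B).symm
  have hB11h : B11.IsHermitian := by
    ext i j
    rw [conjTranspose_apply]
    show star (B (Sum.inl j) (Sum.inl i)) = B (Sum.inl i) (Sum.inl j)
    conv_rhs => rw [← hBherm]
    rw [conjTranspose_apply]
  have hB22h : B22.IsHermitian := by
    ext i j
    rw [conjTranspose_apply]
    show star (B (Sum.inr j) (Sum.inr i)) = B (Sum.inr i) (Sum.inr j)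
    conv_rhs => rw [← hBherm]
    rw [conjTranspose_apply]
  have hB21e : B21 = B12ᴴ := by
    ext i j
    rw [conjTranspose_apply]
    show B (Sum.inr i) (Sum.inl j) = star (B (Sum.inl j) (Sum.inr i))
    conv_lhs => rw [← hBherm]
    rw [conjTranspose_apply]
  have htr2 : B11.trace + B22.trace = 0 := by
    rw [← htrB]
    simp [Matrix.trace, Matrix.diag, Fintype.sum_sum_type, hB11, hB22,
      Matrix.toBlocks₁₁, Matrix.toBlocks₂₂]
  obtain ⟨V, W, hV, hW, hdiag⟩ := pair_lemma B11 B22 B12 hB11h hB22h htr2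
  set N : Matrix (Fin n ⊕ Fin n) (Fin n ⊕ Fin n) ℂ := fromBlocks V 0 0 W with hN
  have hNH : Nᴴ = fromBlocks Vᴴ 0 0 Wᴴ := by
    rw [hN, fromBlocks_conjTranspose]
    norm_num
  have hNN : Nᴴ * N = 1 := by
    rw [hNH, hN, fromBlocks_multiply]
    simp [hV, hW, fromBlocks_one]
  have hNKN : Nᴴ * K * N = K := by
    rw [hNH, hK, hN, fromBlocks_multiply, fromBlocks_multiply]
    simp only [Matrix.mul_zero, Matrix.zero_mul, add_zero, zero_add, so_mulM',
      Matrix.smul_mul, hV, hW]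
  have hTKT : T * K * Tᴴ = J := by
    rw [← hTJT, show T * (Tᴴ * J * T) * Tᴴ = (T * Tᴴ) * J * (T * Tᴴ) by
      simp only [mul_assoc], hTTH, one_mul, mul_one]
  set M : Matrix (Fin n ⊕ Fin n) (Fin n ⊕ Fin n) ℂ :=
    fromBlocks (Vᴴ*B11*V) (Vᴴ*B12*W) (Wᴴ*B12ᴴ*V) (Wᴴ*B22*W) with hM
  have hMeq : Nᴴ * B * N = M := by
    rw [hNH, hBb, hN, fromBlocks_multiply, fromBlocks_multiply, hM]
    simp [hB21e]
  refine ⟨T * N * Tᴴ, ?_, ?_, ?_⟩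
  · calc (T * N * Tᴴ)ᴴ * (T * N * Tᴴ)
        = T * (Nᴴ * ((Tᴴ * T) * (N * Tᴴ))) := by
          simp only [conjTranspose_mul, conjTranspose_conjTranspose, mul_assoc]
      _ = 1 := by
          rw [hTT, one_mul, show Nᴴ * (N * Tᴴ) = (Nᴴ * N) * Tᴴ from (mul_assoc _ _ _).symm,
            hNN, one_mul, hTTH]
  · calc (T * N * Tᴴ)ᴴ * J * (T * N * Tᴴ)
        = T * Nᴴ * (Tᴴ * J * T) * N * Tᴴ := by
          simp only [conjTranspose_mul, conjTranspose_conjTranspose, mul_assoc]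
      _ = J := by
          rw [hTJT, show T * Nᴴ * K * N * Tᴴ = T * (Nᴴ * K * N) * Tᴴ by
            simp only [mul_assoc], hNKN, hTKT]
  · intro i
    have hC : (T * N * Tᴴ)ᴴ * A * (T * N * Tᴴ) = T * M * Tᴴ := by
      rw [← hMeq, hB]
      simp only [conjTranspose_mul, conjTranspose_conjTranspose, mul_assoc]
    rw [hC, hM, hT, hTH, fromBlocks_multiply, fromBlocks_multiply]
    rcases i with k | k
    · rw [fromBlocks_apply₁₁]
      simp only [so_mulM, so_mulM', Matrix.add_apply, Matrix.smul_apply, smul_eq_mul,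
        smul_add, smul_smul]
      linear_combination (s*s) * (hdiag k).1 + (s*s) * (hdiag k).2
    · rw [fromBlocks_apply₂₂]
      simp only [so_mulM, so_mulM', Matrix.add_apply, Matrix.smul_apply, smul_eq_mul,
        smul_add, smul_smul]
      linear_combination (-(s*Complex.I)*(s*Complex.I)) * (hdiag k).1
        + ((s*Complex.I)*(s*Complex.I)) * (hdiag k).2
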